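/- For all n ≥ 1 and 1 ≤ i ≤ n, the number of permutations of [n] avoiding both 1243 and 1342 and starting with the letter i equals S_{n,i}. -/
import Mathlib

/-- `π` contains the pattern `p` (given as the sequence of its values). -/
def ContainsPat {n k : ℕ} (π : Equiv.Perm (Fin n)) (p : Fin k → ℕ) : Prop :=
  ∃ f : Fin k → Fin n, StrictMono f ∧ ∀ a b : Fin k, p a < p b ↔ π (f a) < π (f b)

/-- The first letter of `π` (in one-line notation, with values in `[n] = {1,…,n}`) is `i`. -/
def FirstIs {n : ℕ} (π : Equiv.Perm (Fin n)) (i : ℕ) : Prop :=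
  ∀ j : Fin n, (j : ℕ) = 0 → (π j : ℕ) + 1 = i



open Finset

/-- bad 4-tuple avoidance -/
def Avoid {n : ℕ} (π : Equiv.Perm (Fin n)) : Prop :=
  ∀ a b c d : Fin n, a < b → b < c → c < d →
    (π a : ℕ) < π b → (π b : ℕ) < π c → (π a : ℕ) < π d → (π d : ℕ) < π c → False

def Ms {n : ℕ} (τ : Equiv.Perm (Fin n)) : ℕ :=
  Finset.univ.sup fun q : Fin n × Fin n =>
    if q.1 < q.2 ∧ (τ q.2 : ℕ) < τ q.1 then (τ q.2 : ℕ) + 1 else 0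

def ms {n : ℕ} (τ : Equiv.Perm (Fin n)) : ℕ :=
  Finset.univ.sup fun t : Fin n × Fin n × Fin n =>
    if t.1 < t.2.1 ∧ t.2.1 < t.2.2 ∧ (τ t.1 : ℕ) < τ t.2.1 ∧ (τ t.2.2 : ℕ) < τ t.2.1
    then min (τ t.1 : ℕ) (τ t.2.2 : ℕ) + 1 else 0

theorem Ms_le_iff {n : ℕ} (τ : Equiv.Perm (Fin n)) (k : ℕ) :
    Ms τ ≤ k ↔ ∀ c d : Fin n, c < d → (τ d : ℕ) < τ c → (τ d : ℕ) + 1 ≤ k := by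
  rw [Ms, Finset.sup_le_iff]
  constructor
  · intro H c d h1 h2
    have := H (c, d) (Finset.mem_univ _)
    simpa [h1, h2] using this
  · intro H q _
    split_ifs with h
    · exact H q.1 q.2 h.1 h.2
    · exact Nat.zero_le _

theorem le_Ms {n : ℕ} (τ : Equiv.Perm (Fin n)) {c d : Fin n} (h1 : c < d)
    (h2 : (τ d : ℕ) < τ c) : (τ d : ℕ) + 1 ≤ Ms τ := by
  rw [Ms]
  refine le_trans ?_ (Finset.le_sup (Finset.mem_univ (c, d)))
  simp [h1, h2]

theorem ms_le_iff {n : ℕ} (τ : Equiv.Perm (Fin n)) (k : ℕ) :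
    ms τ ≤ k ↔ ∀ b c d : Fin n, b < c → c < d → (τ b : ℕ) < τ c → (τ d : ℕ) < τ c →
      min (τ b : ℕ) (τ d : ℕ) + 1 ≤ k := by
  rw [ms, Finset.sup_le_iff]
  constructor
  · intro H b c d h1 h2 h3 h4
    have := H (b, c, d) (Finset.mem_univ _)
    simpa [h1, h2, h3, h4] using this
  · intro H t _
    split_ifs with h
    · exact H t.1 t.2.1 t.2.2 h.1 h.2.1 h.2.2.1 h.2.2.2
    · exact Nat.zero_le _

theorem le_ms {n : ℕ} (τ : Equiv.Perm (Fin n)) {b c d : Fin n} (h1 : b < c) (h2 : c < d)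
    (h3 : (τ b : ℕ) < τ c) (h4 : (τ d : ℕ) < τ c) :
    min (τ b : ℕ) (τ d : ℕ) + 1 ≤ ms τ := by
  rw [ms]
  refine le_trans ?_ (Finset.le_sup (Finset.mem_univ (b, c, d)))
  simp [h1, h2, h3, h4]

/-- prepend `p` as first letter -/
def prep {L : ℕ} (p : Fin (L + 1)) (τ : Equiv.Perm (Fin L)) : Equiv.Perm (Fin (L + 1)) :=
  (finSuccEquiv' 0).trans ((τ.optionCongr).trans (finSuccEquiv' p).symm)

theorem prep_zero {L : ℕ} (p : Fin (L + 1)) (τ : Equiv.Perm (Fin L)) : prep p τ 0 = p := by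
  simp [prep, finSuccEquiv'_at]

theorem prep_succ {L : ℕ} (p : Fin (L + 1)) (τ : Equiv.Perm (Fin L)) (j : Fin L) :
    prep p τ j.succ = p.succAbove (τ j) := by
  have h : finSuccEquiv' (0 : Fin (L + 1)) j.succ = some j := by
    rw [← Fin.zero_succAbove, finSuccEquiv'_succAbove]
  simp [prep, h, finSuccEquiv'_symm_some]

theorem val_succAbove {L : ℕ} (p : Fin (L + 1)) (i : Fin L) :
    (p.succAbove i : ℕ) = if (i : ℕ) < p then (i : ℕ) else (i : ℕ) + 1 := by
  rw [Fin.succAbove]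
  split_ifs with h1 h2 h2
  · rfl
  · exact absurd h1 (by simpa [Fin.lt_def] using h2)
  · exact absurd (by simpa [Fin.lt_def] using h2) h1
  · rfl

open Finset
section
variable {L : ℕ}

theorem finSuccEquiv'_ne {p x : Fin (L + 1)} (h : x ≠ p) :
    ∃ k : Fin L, finSuccEquiv' p x = some k ∧ p.succAbove k = x := by
  rcases hk : finSuccEquiv' p x with _ | k
  · exfalso; exact h ((finSuccEquiv' p).injective (hk.trans (finSuccEquiv'_at p).symm))
  · refine ⟨k, rfl, ?_⟩
    have := congrArg (finSuccEquiv' p).symm hk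
    rw [Equiv.symm_apply_apply, finSuccEquiv'_symm_some] at this
    exact this.symm

def rest (σ : Equiv.Perm (Fin (L + 1))) : Equiv.Perm (Fin L) :=
  Equiv.removeNone ((finSuccEquiv' 0).symm.trans (σ.trans (finSuccEquiv' (σ 0))))

theorem rest_spec (σ : Equiv.Perm (Fin (L + 1))) (j : Fin L) :
    (σ 0).succAbove (rest σ j) = σ j.succ := by
  set e := ((finSuccEquiv' (0:Fin (L+1))).symm.trans (σ.trans (finSuccEquiv' (σ 0)))) with he
  have hsj : (finSuccEquiv' (0 : Fin (L+1))).symm (some j) = j.succ := by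
    rw [finSuccEquiv'_symm_some, Fin.zero_succAbove]
  have hne : σ j.succ ≠ σ 0 := fun hc => by
    have := σ.injective hc
    exact (Fin.succ_ne_zero j) this
  obtain ⟨k, hk, hk2⟩ := finSuccEquiv'_ne hne
  have hesome : e (some j) = some k := by
    rw [he, Equiv.trans_apply, hsj, Equiv.trans_apply, hk]
  have h0 : some (Equiv.removeNone e j) = e (some j) :=
    Equiv.removeNone_some e ⟨k, hesome⟩
  rw [hesome] at h0
  have : Equiv.removeNone e j = k := by injection h0
  rw [rest, ← he, this, hk2]
end

section
variable {L : ℕ}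
theorem rest_prep (p : Fin (L + 1)) (τ : Equiv.Perm (Fin L)) : rest (prep p τ) = τ := by
  apply Equiv.ext; intro j
  apply Fin.succAbove_right_injective (p := p)
  have h := rest_spec (prep p τ) j
  rw [prep_zero] at h
  rw [h, prep_succ]

theorem prep_rest (σ : Equiv.Perm (Fin (L + 1))) : prep (σ 0) (rest σ) = σ := by
  apply Equiv.ext; intro x
  induction x using Fin.cases with
  | zero => rw [prep_zero]
  | succ j => rw [prep_succ, rest_spec]

def prepEquiv : Fin (L + 1) × Equiv.Perm (Fin L) ≃ Equiv.Perm (Fin (L + 1)) where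
  toFun x := prep x.1 x.2
  invFun σ := (σ 0, rest σ)
  left_inv := by rintro ⟨p, τ⟩; exact Prod.ext (prep_zero p τ) (rest_prep p τ)
  right_inv := prep_rest

theorem card_prod_filter {α β : Type*} [Fintype α] [Fintype β] [DecidableEq α] [DecidableEq β]
    (Q : α × β → Prop) [DecidablePred Q] :
    (univ.filter Q).card = ∑ p : α, (univ.filter fun b => Q (p, b)).card := by
  rw [Finset.card_eq_sum_card_fiberwise (f := fun x : α × β => x.1) (t := univ)
    (fun x _ => mem_univ _)]
  refine Finset.sum_congr rfl fun p _ => ?_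
  apply Finset.card_bij (fun x _ => x.2)
  · intro x hx
    simp only [mem_filter, mem_univ, true_and] at hx ⊢
    obtain ⟨h1, h2⟩ := hx
    rw [← h2]; exact h1

  · intro x hx y hy hxy
    simp only [mem_filter] at hx hy
    exact Prod.ext (hx.2.trans hy.2.symm) hxy
  · intro b hb
    simp only [mem_filter, mem_univ, true_and] at hb ⊢
    exact ⟨(p, b), ⟨hb, rfl⟩, rfl⟩

theorem card_perm_succ (P : Equiv.Perm (Fin (L + 1)) → Prop) [DecidablePred P] :
    Fintype.card {σ : Equiv.Perm (Fin (L + 1)) // P σ} =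
      ∑ p : Fin (L + 1), Fintype.card {τ : Equiv.Perm (Fin L) // P (prep p τ)} := by
  rw [Fintype.card_congr ((prepEquiv.subtypeEquiv (fun a => Iff.rfl)).symm :
    {σ // P σ} ≃ {x : Fin (L + 1) × Equiv.Perm (Fin L) // P (prepEquiv x)})]
  rw [Fintype.card_subtype]
  rw [card_prod_filter]
  refine Finset.sum_congr rfl fun p _ => ?_
  rw [Fintype.card_subtype]
  rfl
end

section
variable {L : ℕ}
theorem vlt (p : Fin (L + 1)) (x y : Fin L) :
    (p.succAbove x : ℕ) < p.succAbove y ↔ (x : ℕ) < y := by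
  rw [val_succAbove, val_succAbove]; split_ifs <;> omega

theorem vgtp (p : Fin (L + 1)) (x : Fin L) :
    (p : ℕ) < p.succAbove x ↔ (p : ℕ) ≤ x := by
  rw [val_succAbove]; split_ifs <;> omega

theorem val_ne {n : ℕ} (τ : Equiv.Perm (Fin n)) {a b : Fin n} (h : a ≠ b) :
    (τ a : ℕ) ≠ τ b := fun hc => h (τ.injective (Fin.val_injective hc))

theorem exists_val {n : ℕ} (τ : Equiv.Perm (Fin n)) {v : ℕ} (h : v < n) :
    ∃ j, (τ j : ℕ) = v := ⟨τ.symm ⟨v, h⟩, by simp⟩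

theorem ms_le_Ms {n : ℕ} (τ : Equiv.Perm (Fin n)) : ms τ ≤ Ms τ := by
  rw [ms_le_iff]
  intro b c d h1 h2 h3 h4
  have := le_Ms τ h2 h4
  omega

theorem exists_Ms_witness {n : ℕ} (τ : Equiv.Perm (Fin n)) (h : 1 ≤ Ms τ) :
    ∃ c d, c < d ∧ (τ d : ℕ) < τ c ∧ (τ d : ℕ) + 1 = Ms τ := by
  by_contra hc
  push_neg at hc
  have : Ms τ ≤ Ms τ - 1 := by
    rw [Ms_le_iff]
    intro c d h1 h2
    have h3 := le_Ms τ h1 h2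
    have h4 := hc c d h1 h2
    omega
  omega

theorem exists_ms_witness {n : ℕ} (τ : Equiv.Perm (Fin n)) (h : 1 ≤ ms τ) :
    ∃ b c d, b < c ∧ c < d ∧ (τ b : ℕ) < τ c ∧ (τ d : ℕ) < τ c ∧
      min (τ b : ℕ) (τ d : ℕ) + 1 = ms τ := by
  by_contra hc
  push_neg at hc
  have : ms τ ≤ ms τ - 1 := by
    rw [ms_le_iff]
    intro b c d h1 h2 h3 h4
    have h5 := le_ms τ h1 h2 h3 h4
    have h6 := hc b c d h1 h2 h3 h4
    omega
  omega

/-- key structural lemma: an inversion whose top exceeds `Ms` has bottom below `ms`. -/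
theorem ms_ge_of_high {n : ℕ} (τ : Equiv.Perm (Fin n)) {c d : Fin n} (hcd : c < d)
    (hv : (τ d : ℕ) < τ c) (hc : Ms τ < τ c) : (τ d : ℕ) + 1 ≤ ms τ := by
  have hMd : (τ d : ℕ) + 1 ≤ Ms τ := le_Ms τ hcd hv
  have hw : (τ c : ℕ) - 1 < n := by have := (τ c).isLt; omega
  obtain ⟨e, he⟩ := exists_val τ hw
  have hec : e ≠ c := by
    intro hh; rw [hh] at he; omega
  have helt : e < c := by
    rcases lt_or_gt_of_ne hec with h | h
    · exact h
    · exfalso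
      have := le_Ms τ (d := e) h (by omega)
      omega
  have h3 : (τ e : ℕ) < τ c := by omega
  have h4 := le_ms τ helt hcd h3 hv
  have : min (τ e : ℕ) (τ d : ℕ) = τ d := by omega
  omega

variable (p : Fin (L + 1)) (τ : Equiv.Perm (Fin L))

theorem avoid_prep_iff : Avoid (prep p τ) ↔ Avoid τ ∧ ms τ ≤ p := by
  constructor
  · intro H
    constructor
    · intro a b c d h1 h2 h3 v1 v2 v3 v4
      refine H a.succ b.succ c.succ d.succ (Fin.succ_lt_succ_iff.mpr h1)
        (Fin.succ_lt_succ_iff.mpr h2) (Fin.succ_lt_succ_iff.mpr h3) ?_ ?_ ?_ ?_ <;>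
        rw [prep_succ, prep_succ, vlt] <;> assumption
    · rw [ms_le_iff]
      intro b c d h1 h2 h3 h4
      by_contra hcon
      push_neg at hcon
      refine H 0 b.succ c.succ d.succ (Fin.succ_pos b) (Fin.succ_lt_succ_iff.mpr h1)
        (Fin.succ_lt_succ_iff.mpr h2) ?_ ?_ ?_ ?_
      · rw [prep_zero, prep_succ, vgtp]; omega
      · rw [prep_succ, prep_succ, vlt]; exact h3
      · rw [prep_zero, prep_succ, vgtp]; omega
      · rw [prep_succ, prep_succ, vlt]; exact h4
  · rintro ⟨HA, hm⟩
    intro a b c d h1 h2 h3 v1 v2 v3 v4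
    induction b using Fin.cases with
    | zero => exact absurd h1 (by simp [Fin.lt_def])
    | succ b =>
    induction c using Fin.cases with
    | zero => exact absurd h2 (by simp [Fin.lt_def])
    | succ c =>
    induction d using Fin.cases with
    | zero => exact absurd h3 (by simp [Fin.lt_def])
    | succ d =>
    induction a using Fin.cases with
    | succ a =>
      rw [prep_succ, prep_succ] at v1 v2 v3 v4
      exact HA a b c d (Fin.succ_lt_succ_iff.mp h1) (Fin.succ_lt_succ_iff.mp h2)
        (Fin.succ_lt_succ_iff.mp h3)
        ((vlt p _ _).mp v1) ((vlt p _ _).mp v2) ((vlt p _ _).mp v3) ((vlt p _ _).mp v4)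
    | zero =>
      rw [prep_zero, prep_succ] at v1 v3
      rw [prep_succ, prep_succ] at v2 v4
      rw [vgtp] at v1 v3
      rw [vlt] at v2 v4
      have := le_ms τ (Fin.succ_lt_succ_iff.mp h2) (Fin.succ_lt_succ_iff.mp h3) v2 v4
      omega
theorem Ms_prep_gt (h : Ms τ < p) : Ms (prep p τ) = (p : ℕ) := by
  apply le_antisymm
  · rw [Ms_le_iff]
    intro c d h1 h2
    induction d using Fin.cases with
    | zero => exact absurd h1 (by simp [Fin.lt_def])
    | succ d =>
    induction c using Fin.cases with
    | zero =>
      rw [prep_zero, prep_succ, val_succAbove] at h2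
      rw [prep_succ, val_succAbove]
      split_ifs at h2 ⊢ <;> omega
    | succ c =>
      rw [prep_succ, prep_succ, vlt] at h2
      have := le_Ms τ (Fin.succ_lt_succ_iff.mp h1) h2
      rw [prep_succ, val_succAbove]
      split_ifs <;> omega
  · by_cases hp : (p : ℕ) = 0
    · omega
    · have hlt : (p : ℕ) - 1 < L := by have := p.isLt; omega
      obtain ⟨j, hj⟩ := exists_val τ hlt
      have h2 : ((prep p τ) j.succ : ℕ) < (prep p τ) 0 := by
        rw [prep_zero, prep_succ, val_succAbove, if_pos (by omega)]; omega
      have := le_Ms (prep p τ) (Fin.succ_pos j) h2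
      rw [prep_succ, val_succAbove, if_pos (by omega)] at this
      omega

theorem Ms_prep_eq (h : (p : ℕ) = Ms τ) : Ms (prep p τ) = Ms τ := by
  apply le_antisymm
  · rw [Ms_le_iff]
    intro c d h1 h2
    induction d using Fin.cases with
    | zero => exact absurd h1 (by simp [Fin.lt_def])
    | succ d =>
    induction c using Fin.cases with
    | zero =>
      rw [prep_zero, prep_succ, val_succAbove] at h2
      rw [prep_succ, val_succAbove]
      split_ifs at h2 ⊢ <;> omega
    | succ c =>
      rw [prep_succ, prep_succ, vlt] at h2
      have := le_Ms τ (Fin.succ_lt_succ_iff.mp h1) h2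
      rw [prep_succ, val_succAbove]
      split_ifs <;> omega
  · rcases Nat.eq_zero_or_pos (Ms τ) with h0 | h0
    · omega
    · obtain ⟨c, d, hcd, hv, hM⟩ := exists_Ms_witness τ h0
      have h2 : ((prep p τ) d.succ : ℕ) < (prep p τ) c.succ := by
        rw [prep_succ, prep_succ, val_succAbove, val_succAbove]
        split_ifs <;> omega
      have := le_Ms (prep p τ) (Fin.succ_lt_succ_iff.mpr hcd) h2
      rw [prep_succ, val_succAbove, if_pos (by omega)] at this
      omega

theorem Ms_prep_lt (h : (p : ℕ) < Ms τ) : Ms (prep p τ) = Ms τ + 1 := by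
  apply le_antisymm
  · rw [Ms_le_iff]
    intro c d h1 h2
    induction d using Fin.cases with
    | zero => exact absurd h1 (by simp [Fin.lt_def])
    | succ d =>
    induction c using Fin.cases with
    | zero =>
      rw [prep_zero, prep_succ, val_succAbove] at h2
      rw [prep_succ, val_succAbove]
      split_ifs at h2 ⊢ <;> omega
    | succ c =>
      rw [prep_succ, prep_succ, vlt] at h2
      have := le_Ms τ (Fin.succ_lt_succ_iff.mp h1) h2
      rw [prep_succ, val_succAbove]
      split_ifs <;> omega
  · obtain ⟨c, d, hcd, hv, hM⟩ := exists_Ms_witness τ (by omega)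
    have h2 : ((prep p τ) d.succ : ℕ) < (prep p τ) c.succ := by
      rw [prep_succ, prep_succ, val_succAbove, val_succAbove]
      split_ifs <;> omega
    have := le_Ms (prep p τ) (Fin.succ_lt_succ_iff.mpr hcd) h2
    rw [prep_succ, val_succAbove, if_neg (by omega)] at this
    omega

theorem ms_prep_gt (hm : ms τ ≤ p) (h : Ms τ < p) : ms (prep p τ) = ms τ := by
  apply le_antisymm
  · rw [ms_le_iff]
    intro b c d h1 h2 h3 h4
    induction d using Fin.cases with
    | zero => exact absurd h2 (by simp [Fin.lt_def])
    | succ d =>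
    induction c using Fin.cases with
    | zero => exact absurd h1 (by simp [Fin.lt_def])
    | succ c =>
    induction b using Fin.cases with
    | succ b =>
      rw [prep_succ, prep_succ] at h3 h4
      rw [vlt] at h3 h4
      have := le_ms τ (Fin.succ_lt_succ_iff.mp h1) (Fin.succ_lt_succ_iff.mp h2) h3 h4
      rw [prep_succ, prep_succ, val_succAbove, val_succAbove]
      split_ifs <;> omega
    | zero =>
      rw [prep_zero, prep_succ, vgtp] at h3
      rw [prep_succ, prep_succ, vlt] at h4
      have hhigh : Ms τ < τ c := by omega
      have := ms_ge_of_high τ (Fin.succ_lt_succ_iff.mp h2) h4 hhigh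
      rw [prep_zero, prep_succ, val_succAbove]
      split_ifs <;> omega
  · rcases Nat.eq_zero_or_pos (ms τ) with h0 | h0
    · omega
    · obtain ⟨b, c, d, hbc, hcd, v1, v2, hv⟩ := exists_ms_witness τ h0
      have g1 : ((prep p τ) b.succ : ℕ) < (prep p τ) c.succ := by
        rw [prep_succ, prep_succ, val_succAbove, val_succAbove]; split_ifs <;> omega
      have g2 : ((prep p τ) d.succ : ℕ) < (prep p τ) c.succ := by
        rw [prep_succ, prep_succ, val_succAbove, val_succAbove]; split_ifs <;> omega
      have := le_ms (prep p τ) (Fin.succ_lt_succ_iff.mpr hbc) (Fin.succ_lt_succ_iff.mpr hcd) g1 g2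
      rw [prep_succ, prep_succ, val_succAbove, val_succAbove] at this
      split_ifs at this <;> omega

theorem ms_prep_eq (hm : ms τ ≤ p) (h : (p : ℕ) = Ms τ) : ms (prep p τ) = Ms τ := by
  apply le_antisymm
  · rw [ms_le_iff]
    intro b c d h1 h2 h3 h4
    induction d using Fin.cases with
    | zero => exact absurd h2 (by simp [Fin.lt_def])
    | succ d =>
    induction c using Fin.cases with
    | zero => exact absurd h1 (by simp [Fin.lt_def])
    | succ c =>
    induction b using Fin.cases with
    | succ b =>
      rw [prep_succ, prep_succ] at h3 h4
      rw [vlt] at h3 h4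
      have h5 := le_ms τ (Fin.succ_lt_succ_iff.mp h1) (Fin.succ_lt_succ_iff.mp h2) h3 h4
      have h6 := ms_le_Ms τ
      rw [prep_succ, prep_succ, val_succAbove, val_succAbove]
      split_ifs <;> omega
    | zero =>
      rw [prep_zero, prep_succ, vgtp] at h3
      rw [prep_succ, prep_succ, vlt] at h4
      have h5 := le_Ms τ (Fin.succ_lt_succ_iff.mp h2) h4
      rw [prep_zero, prep_succ, val_succAbove]
      split_ifs <;> omega
  · rcases Nat.eq_zero_or_pos (Ms τ) with h0 | h0
    · omega
    · obtain ⟨c, d, hcd, hv, hM⟩ := exists_Ms_witness τ h0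
      have g1 : ((prep p τ) 0 : ℕ) < (prep p τ) c.succ := by
        rw [prep_zero, prep_succ, val_succAbove]; split_ifs <;> omega
      have g2 : ((prep p τ) d.succ : ℕ) < (prep p τ) c.succ := by
        rw [prep_succ, prep_succ, val_succAbove, val_succAbove]; split_ifs <;> omega
      have := le_ms (prep p τ) (Fin.succ_pos c) (Fin.succ_lt_succ_iff.mpr hcd) g1 g2
      rw [prep_zero, prep_succ, val_succAbove, if_pos (by omega)] at this
      omega

theorem ms_prep_lt (hm : ms τ ≤ p) (h : (p : ℕ) < Ms τ) : ms (prep p τ) = (p : ℕ) + 1 := by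
  apply le_antisymm
  · rw [ms_le_iff]
    intro b c d h1 h2 h3 h4
    induction d using Fin.cases with
    | zero => exact absurd h2 (by simp [Fin.lt_def])
    | succ d =>
    induction c using Fin.cases with
    | zero => exact absurd h1 (by simp [Fin.lt_def])
    | succ c =>
    induction b using Fin.cases with
    | succ b =>
      rw [prep_succ, prep_succ] at h3 h4
      rw [vlt] at h3 h4
      have h5 := le_ms τ (Fin.succ_lt_succ_iff.mp h1) (Fin.succ_lt_succ_iff.mp h2) h3 h4
      rw [prep_succ, prep_succ, val_succAbove, val_succAbove]
      split_ifs <;> omega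
    | zero =>
      rw [prep_zero, prep_succ, vgtp] at h3
      rw [prep_zero, prep_succ, val_succAbove]
      split_ifs <;> omega
  · obtain ⟨c, d, hcd, hv, hM⟩ := exists_Ms_witness τ (by omega)
    have g1 : ((prep p τ) 0 : ℕ) < (prep p τ) c.succ := by
      rw [prep_zero, prep_succ, val_succAbove]; split_ifs <;> omega
    have g2 : ((prep p τ) d.succ : ℕ) < (prep p τ) c.succ := by
      rw [prep_succ, prep_succ, val_succAbove, val_succAbove]; split_ifs <;> omega
    have := le_ms (prep p τ) (Fin.succ_pos c) (Fin.succ_lt_succ_iff.mpr hcd) g1 g2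
    rw [prep_zero, prep_succ, val_succAbove, if_neg (by omega)] at this
    omega

end

section
variable {L : ℕ}
open Finset

instance {n : ℕ} : DecidablePred (@Avoid n) := fun π => by unfold Avoid; infer_instance

/-- joint count -/
def ccnt (L a b : ℕ) : ℕ :=
  Fintype.card {τ : Equiv.Perm (Fin L) // Avoid τ ∧ ms τ = a ∧ Ms τ = b}

theorem Ms_le_pred {n : ℕ} (τ : Equiv.Perm (Fin n)) : Ms τ ≤ n - 1 := by
  rw [Ms_le_iff]
  intro c d _ h2
  have := (τ c).isLt
  omega

theorem card_subtype_congr {α : Type*} [Fintype α] {P Q : α → Prop} [DecidablePred P]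
    [DecidablePred Q] (h : ∀ x, P x ↔ Q x) :
    Fintype.card {x // P x} = Fintype.card {x // Q x} :=
  Fintype.card_congr (Equiv.subtypeEquivRight h)

theorem card_subtype_false {α : Type*} [Fintype α] {P : α → Prop} [DecidablePred P]
    (h : ∀ x, ¬ P x) : Fintype.card {x // P x} = 0 := by
  have : IsEmpty {x // P x} := ⟨fun x => h x.1 x.2⟩
  exact Fintype.card_eq_zero

/-- partition a card by the (ℕ-valued) statistic `f` -/
theorem card_partition {α : Type*} [Fintype α] [DecidableEq α] (P : α → Prop) [DecidablePred P]
    (f : α → ℕ) (K : ℕ) (hf : ∀ x, P x → f x < K) :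
    Fintype.card {x // P x} = ∑ v ∈ Finset.range K, Fintype.card {x // P x ∧ f x = v} := by
  rw [Fintype.card_subtype]
  rw [Finset.card_eq_sum_card_fiberwise (f := f) (t := Finset.range K)
    (fun x hx => Finset.mem_range.mpr (hf x (Finset.mem_filter.mp hx).2))]
  refine Finset.sum_congr rfl fun v _ => ?_
  rw [Fintype.card_subtype]
  congr 1
  ext x
  simp [and_assoc]

theorem card_ms_le (k b' : ℕ) :
    Fintype.card {τ : Equiv.Perm (Fin L) // Avoid τ ∧ ms τ ≤ k ∧ Ms τ = b'} =
      ∑ m ∈ Finset.range (k + 1), ccnt L m b' := by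
  rw [card_partition (fun τ => Avoid τ ∧ ms τ ≤ k ∧ Ms τ = b') (fun τ => ms τ) (k + 1)
    (fun τ hτ => by show ms τ < k + 1; omega)]
  refine Finset.sum_congr rfl fun m hm => ?_
  rw [Finset.mem_range] at hm
  unfold ccnt
  apply card_subtype_congr
  intro τ
  constructor
  · rintro ⟨⟨h1, h2, h3⟩, h4⟩; exact ⟨h1, h4, h3⟩
  · rintro ⟨h1, h2, h3⟩; exact ⟨⟨h1, by omega, h3⟩, h2⟩

theorem card_Ms_lt (a hi : ℕ) :
    Fintype.card {τ : Equiv.Perm (Fin L) // Avoid τ ∧ ms τ = a ∧ Ms τ < hi} =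
      ∑ M ∈ Finset.range hi, ccnt L a M := by
  rw [card_partition (fun τ => Avoid τ ∧ ms τ = a ∧ Ms τ < hi) (fun τ => Ms τ) hi
    (fun τ hτ => by show Ms τ < hi; omega)]
  refine Finset.sum_congr rfl fun M hM => ?_
  rw [Finset.mem_range] at hM
  unfold ccnt
  apply card_subtype_congr
  intro τ
  constructor
  · rintro ⟨⟨h1, h2, h3⟩, h4⟩; exact ⟨h1, h2, h4⟩
  · rintro ⟨h1, h2, h3⟩; exact ⟨⟨h1, h2, by omega⟩, h3⟩
end
section
variable {L : ℕ}
open Finset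

theorem fiber_card (p : Fin (L + 1)) (a b : ℕ) :
    Fintype.card {τ : Equiv.Perm (Fin L) //
        Avoid (prep p τ) ∧ ms (prep p τ) = a ∧ Ms (prep p τ) = b} =
      (if (p : ℕ) + 1 = a ∧ a < b then ∑ m ∈ Finset.range a, ccnt L m (b - 1) else 0)
      + (if (p : ℕ) = a ∧ a = b then ∑ m ∈ Finset.range (a + 1), ccnt L m a else 0)
      + (if (p : ℕ) = b ∧ a < b then ∑ M ∈ Finset.range b, ccnt L a M else 0) := by
  by_cases hc1 : (p : ℕ) + 1 = a ∧ a < b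
  · rw [if_pos hc1, if_neg (by omega), if_neg (by omega)]
    have he : ∀ τ : Equiv.Perm (Fin L),
        (Avoid (prep p τ) ∧ ms (prep p τ) = a ∧ Ms (prep p τ) = b) ↔
        (Avoid τ ∧ ms τ ≤ (p : ℕ) ∧ Ms τ = b - 1) := by
      intro τ
      rw [avoid_prep_iff]
      constructor
      · rintro ⟨⟨hA, hm⟩, hsa, hsb⟩
        rcases lt_trichotomy ((p : ℕ)) (Ms τ) with h | h | h
        · rw [ms_prep_lt p τ hm h] at hsa
          rw [Ms_prep_lt p τ h] at hsb
          exact ⟨hA, hm, by omega⟩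
        · rw [ms_prep_eq p τ hm h, ← h] at hsa
          rw [Ms_prep_eq p τ h, ← h] at hsb
          omega
        · rw [Ms_prep_gt p τ h] at hsb
          omega
      · rintro ⟨hA, hm, hM⟩
        have hlt : (p : ℕ) < Ms τ := by omega
        rw [ms_prep_lt p τ hm hlt, Ms_prep_lt p τ hlt]
        exact ⟨⟨hA, hm⟩, by omega, by omega⟩
    rw [card_subtype_congr he, card_ms_le, hc1.1]; omega
  by_cases hc2 : (p : ℕ) = a ∧ a = b
  · rw [if_neg (by omega), if_pos hc2, if_neg (by omega)]
    have he : ∀ τ : Equiv.Perm (Fin L),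
        (Avoid (prep p τ) ∧ ms (prep p τ) = a ∧ Ms (prep p τ) = b) ↔
        (Avoid τ ∧ ms τ ≤ (p : ℕ) ∧ Ms τ = (p : ℕ)) := by
      intro τ
      rw [avoid_prep_iff]
      constructor
      · rintro ⟨⟨hA, hm⟩, hsa, hsb⟩
        rcases lt_trichotomy ((p : ℕ)) (Ms τ) with h | h | h
        · rw [ms_prep_lt p τ hm h] at hsa
          omega
        · exact ⟨hA, hm, h.symm⟩
        · have h1 := ms_prep_gt p τ hm h
          have h2 := Ms_prep_gt p τ h
          have h3 := ms_le_Ms τ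
          omega
      · rintro ⟨hA, hm, hM⟩
        rw [ms_prep_eq p τ hm hM.symm, Ms_prep_eq p τ hM.symm]
        exact ⟨⟨hA, hm⟩, by omega, by omega⟩
    rw [card_subtype_congr he, card_ms_le]
    rw [Nat.zero_add, Nat.add_zero]
    obtain ⟨h1, h2⟩ := hc2
    subst h1; subst h2
    rfl
  by_cases hc3 : (p : ℕ) = b ∧ a < b
  · rw [if_neg (by omega), if_neg (by omega), if_pos hc3]
    have he : ∀ τ : Equiv.Perm (Fin L),
        (Avoid (prep p τ) ∧ ms (prep p τ) = a ∧ Ms (prep p τ) = b) ↔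
        (Avoid τ ∧ ms τ = a ∧ Ms τ < b) := by
      intro τ
      rw [avoid_prep_iff]
      constructor
      · rintro ⟨⟨hA, hm⟩, hsa, hsb⟩
        rcases lt_trichotomy ((p : ℕ)) (Ms τ) with h | h | h
        · rw [ms_prep_lt p τ hm h] at hsa
          rw [Ms_prep_lt p τ h] at hsb
          omega
        · rw [ms_prep_eq p τ hm h] at hsa
          rw [Ms_prep_eq p τ h] at hsb
          omega
        · rw [ms_prep_gt p τ hm h] at hsa
          rw [Ms_prep_gt p τ h] at hsb
          exact ⟨hA, hsa, by omega⟩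
      · rintro ⟨hA, hm, hM⟩
        have h3 := ms_le_Ms τ
        have hgt : Ms τ < (p : ℕ) := by omega
        rw [ms_prep_gt p τ (by omega) hgt, Ms_prep_gt p τ hgt]
        exact ⟨⟨hA, by omega⟩, by omega, by omega⟩
    rw [card_subtype_congr he, card_Ms_lt]
    obtain ⟨h1, h2⟩ := hc3
    omega
  · rw [if_neg hc1, if_neg hc2, if_neg hc3]
    apply card_subtype_false
    rintro τ ⟨hA', hsa, hsb⟩
    rw [avoid_prep_iff] at hA'
    obtain ⟨hA, hm⟩ := hA'
    rcases lt_trichotomy ((p : ℕ)) (Ms τ) with h | h | h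
    · rw [ms_prep_lt p τ hm h] at hsa
      rw [Ms_prep_lt p τ h] at hsb
      exact hc1 ⟨by omega, by omega⟩
    · rw [ms_prep_eq p τ hm h] at hsa
      rw [Ms_prep_eq p τ h] at hsb
      exact hc2 ⟨by omega, by omega⟩
    · rw [ms_prep_gt p τ hm h] at hsa
      rw [Ms_prep_gt p τ h] at hsb
      have h3 := ms_le_Ms τ
      exact hc3 ⟨by omega, by omega⟩

theorem sum_if_val {N : ℕ} (v : ℕ) (c : Prop) [Decidable c] (X : ℕ) :
    (∑ p : Fin N, if (p : ℕ) = v ∧ c then X else 0) = if v < N ∧ c then X else 0 := by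
  by_cases hc : c
  · simp only [hc, and_true]
    rw [Fin.sum_univ_eq_sum_range (fun i => if i = v then X else 0)]
    rw [Finset.sum_ite_eq' (Finset.range N) v (fun _ => X)]
    simp [Finset.mem_range]
  · simp [hc]

theorem ccnt_succ (a b : ℕ) : ccnt (L + 1) a b =
    (if 1 ≤ a ∧ a ≤ L + 1 ∧ a < b then ∑ m ∈ Finset.range a, ccnt L m (b - 1) else 0)
    + (if a ≤ L ∧ a = b then ∑ m ∈ Finset.range (a + 1), ccnt L m a else 0)
    + (if b ≤ L ∧ a < b then ∑ M ∈ Finset.range b, ccnt L a M else 0) := by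
  unfold ccnt
  rw [card_perm_succ (fun σ => Avoid σ ∧ ms σ = a ∧ Ms σ = b)]
  rw [Finset.sum_congr rfl (fun p _ => fiber_card p a b)]
  rw [Finset.sum_add_distrib, Finset.sum_add_distrib]
  congr 1
  congr 1
  · have hpt : ∀ p : Fin (L + 1),
        (if (p : ℕ) + 1 = a ∧ a < b then ∑ m ∈ Finset.range a, ccnt L m (b - 1) else 0) =
        (if (p : ℕ) = a - 1 ∧ (1 ≤ a ∧ a < b) then ∑ m ∈ Finset.range a, ccnt L m (b - 1)
          else 0) := by
      intro p; apply if_congr _ rfl rfl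
      constructor
      · rintro ⟨h1, h2⟩; exact ⟨by omega, by omega, h2⟩
      · rintro ⟨h1, h2, h3⟩; exact ⟨by omega, h3⟩
    rw [Finset.sum_congr rfl (fun p _ => hpt p), sum_if_val]
    apply if_congr _ rfl rfl
    constructor
    · rintro ⟨h1, h2, h3⟩; exact ⟨h2, by omega, h3⟩
    · rintro ⟨h1, h2, h3⟩; exact ⟨by omega, h1, h3⟩
  · have hpt : ∀ p : Fin (L + 1),
        (if (p : ℕ) = a ∧ a = b then ∑ m ∈ Finset.range (a + 1), ccnt L m a else 0) =
        (if (p : ℕ) = a ∧ (a = b) then ∑ m ∈ Finset.range (a + 1), ccnt L m a else 0) := by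
      intro p; rfl
    rw [Finset.sum_congr rfl (fun p _ => hpt p), sum_if_val]
    apply if_congr _ rfl rfl
    constructor
    · rintro ⟨h1, h2⟩; exact ⟨by omega, h2⟩
    · rintro ⟨h1, h2⟩; exact ⟨by omega, h2⟩
  · have hpt : ∀ p : Fin (L + 1),
        (if (p : ℕ) = b ∧ a < b then ∑ M ∈ Finset.range b, ccnt L a M else 0) =
        (if (p : ℕ) = b ∧ (a < b) then ∑ M ∈ Finset.range b, ccnt L a M else 0) := by
      intro p; rfl
    rw [Finset.sum_congr rfl (fun p _ => hpt p), sum_if_val]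
    apply if_congr _ rfl rfl
    constructor
    · rintro ⟨h1, h2⟩; exact ⟨by omega, h2⟩
    · rintro ⟨h1, h2⟩; exact ⟨by omega, h2⟩
end
section
variable {L : ℕ}
open Finset

theorem acnt_eq (p : Fin (L + 1)) :
    Fintype.card {σ : Equiv.Perm (Fin (L + 1)) // Avoid σ ∧ σ 0 = p} =
      ∑ m ∈ Finset.range ((p : ℕ) + 1), ∑ b ∈ Finset.range (L + 1), ccnt L m b := by
  rw [card_perm_succ (fun σ => Avoid σ ∧ σ 0 = p)]
  have hfib : ∀ q : Fin (L + 1),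
      Fintype.card {τ : Equiv.Perm (Fin L) // Avoid (prep q τ) ∧ (prep q τ) 0 = p} =
      if q = p then Fintype.card {τ : Equiv.Perm (Fin L) // Avoid τ ∧ ms τ ≤ (p : ℕ)} else 0 := by
    intro q
    by_cases hq : q = p
    · subst hq
      rw [if_pos rfl]
      apply card_subtype_congr
      intro τ
      rw [avoid_prep_iff, prep_zero]
      tauto
    · rw [if_neg hq]
      apply card_subtype_false
      rintro τ ⟨h1, h2⟩
      rw [prep_zero] at h2
      exact hq h2
  rw [Finset.sum_congr rfl (fun q _ => hfib q), Finset.sum_ite_eq' Finset.univ p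
    (fun _ => Fintype.card {τ : Equiv.Perm (Fin L) // Avoid τ ∧ ms τ ≤ (p : ℕ)}),
    if_pos (Finset.mem_univ p)]
  rw [card_partition (fun τ => Avoid τ ∧ ms τ ≤ (p : ℕ)) (fun τ => ms τ) ((p : ℕ) + 1)
    (fun τ hτ => by show ms τ < (p : ℕ) + 1; omega)]
  refine Finset.sum_congr rfl fun m hm => ?_
  rw [Finset.mem_range] at hm
  rw [card_partition (fun τ => (Avoid τ ∧ ms τ ≤ (p : ℕ)) ∧ ms τ = m) (fun τ => Ms τ) (L + 1)
    (fun τ hτ => by show Ms τ < L + 1; have := Ms_le_pred τ; omega)]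
  refine Finset.sum_congr rfl fun b hb => ?_
  unfold ccnt
  apply card_subtype_congr
  intro τ
  constructor
  · rintro ⟨⟨⟨h1, h2⟩, h3⟩, h4⟩; exact ⟨h1, h3, h4⟩
  · rintro ⟨h1, h2, h3⟩; exact ⟨⟨⟨h1, by omega⟩, h2⟩, h3⟩
end

/-! arithmetic layer -/
def gg : ℕ → ℕ → ℕ
  | 0, m => if m = 0 then 1 else 0
  | (T + 1), m =>
    if m ≤ T - 1 then gg T m + ∑ x ∈ Finset.range m, 2 ^ (m - 1 - x) * gg T x else 0

theorem gg_zero_of_ge {T m : ℕ} (hT : 1 ≤ T) (hm : T - 1 < m) : gg T m = 0 := by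
  obtain ⟨T', rfl⟩ : ∃ T', T = T' + 1 := ⟨T - 1, by omega⟩
  rw [gg, if_neg (by omega)]

theorem geo (a : ℕ) : ∀ b : ℕ, a < b →
    (∑ M ∈ Finset.range b, if a ≤ M then (2 : ℕ) ^ (M - a - 1) else 0) = 2 ^ (b - a - 1) := by
  intro b
  induction b with
  | zero => omega
  | succ b ih =>
    intro hb
    rw [Finset.sum_range_succ]
    rcases Nat.lt_or_ge a b with h | h
    · rw [ih h, if_pos (by omega)]
      have hba : b + 1 - a - 1 = (b - a - 1) + 1 := by omega
      rw [hba, pow_succ]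
      omega
    · have ha : a = b := by omega
      subst ha
      have : (∑ M ∈ Finset.range a, if a ≤ M then (2 : ℕ) ^ (M - a - 1) else 0) = 0 := by
        apply Finset.sum_eq_zero
        intro x hx
        rw [Finset.mem_range] at hx
        rw [if_neg (by omega)]
      rw [this, if_pos (le_refl a)]
      simp
theorem gg_succ_zero {L a : ℕ} (h : L - 1 < a) : gg (L + 1) a = 0 := by
  rw [gg, if_neg (by omega)]

theorem ccnt_zero_eval (a b : ℕ) : ccnt 0 a b = if a = 0 ∧ b = 0 then 1 else 0 := by
  have hms : ∀ τ : Equiv.Perm (Fin 0), ms τ = 0 := by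
    intro τ; rw [ms]; simp
  have hMs : ∀ τ : Equiv.Perm (Fin 0), Ms τ = 0 := by
    intro τ; rw [Ms]; simp
  by_cases h : a = 0 ∧ b = 0
  · rw [if_pos h]
    obtain ⟨rfl, rfl⟩ := h
    unfold ccnt
    rw [card_subtype_congr (Q := fun _ => True)
      (fun τ => ⟨fun _ => trivial, fun _ => ⟨fun x => x.elim0, hms τ, hMs τ⟩⟩)]
    simp
  · rw [if_neg h]
    unfold ccnt
    apply card_subtype_false
    rintro τ ⟨_, h2, h3⟩
    rw [hms τ] at h2
    rw [hMs τ] at h3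
    omega

theorem ccnt_closed : ∀ L a b : ℕ,
    ccnt L a b = if a ≤ b ∧ b ≤ L - 1 then gg L a * 2 ^ (b - a - 1) else 0 := by
  intro L
  induction L with
  | zero =>
    intro a b
    rw [ccnt_zero_eval]
    by_cases h : a = 0 ∧ b = 0
    · rw [if_pos h, if_pos (by omega)]
      obtain ⟨rfl, rfl⟩ := h
      simp [gg]
    · rw [if_neg h, if_neg (by omega)]
  | succ L ih =>
    intro a b
    rw [ccnt_succ]
    by_cases hab : a ≤ b ∧ b ≤ L
    case neg =>
      have hT1 : (if 1 ≤ a ∧ a ≤ L + 1 ∧ a < b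
          then ∑ m ∈ Finset.range a, ccnt L m (b - 1) else 0) = 0 := by
        by_cases hc : 1 ≤ a ∧ a ≤ L + 1 ∧ a < b
        · rw [if_pos hc]
          apply Finset.sum_eq_zero
          intro m hm
          rw [Finset.mem_range] at hm
          rw [ih, if_neg (show ¬(m ≤ b - 1 ∧ b - 1 ≤ L - 1) from by omega)]
        · rw [if_neg hc]
      rw [hT1, if_neg (show ¬(a ≤ L ∧ a = b) from by omega),
        if_neg (show ¬(b ≤ L ∧ a < b) from by omega),
        if_neg (show ¬(a ≤ b ∧ b ≤ L + 1 - 1) from by omega)]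
    case pos =>
      rw [if_pos (show a ≤ b ∧ b ≤ L + 1 - 1 from by omega)]
      by_cases heq : a = b
      case pos =>
        subst heq
        rw [if_neg (show ¬(1 ≤ a ∧ a ≤ L + 1 ∧ a < a) from by omega),
          if_neg (show ¬(a ≤ L ∧ a < a) from by omega),
          if_pos (show a ≤ L ∧ a = a from ⟨by omega, rfl⟩)]
        rw [show a - a - 1 = 0 from by omega, pow_zero, mul_one]
        by_cases haL : a ≤ L - 1
        case pos =>
          have hsum : ∀ m ∈ Finset.range (a + 1), ccnt L m a = gg L m * 2 ^ (a - m - 1) := by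
            intro m hm
            rw [Finset.mem_range] at hm
            rw [ih, if_pos (show m ≤ a ∧ a ≤ L - 1 from ⟨by omega, haL⟩)]
          rw [Finset.sum_congr rfl hsum, Finset.sum_range_succ,
            show a - a - 1 = 0 from by omega, pow_zero, mul_one, gg, if_pos haL]
          have : ∀ m ∈ Finset.range a, gg L m * 2 ^ (a - m - 1) = 2 ^ (a - 1 - m) * gg L m := by
            intro m hm
            rw [Finset.mem_range] at hm
            rw [show a - m - 1 = a - 1 - m from by omega, mul_comm]
          rw [Finset.sum_congr rfl this]
          omega
        case neg =>
          have hsum : ∀ m ∈ Finset.range (a + 1), ccnt L m a = 0 := by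
            intro m _
            rw [ih, if_neg (show ¬(m ≤ a ∧ a ≤ L - 1) from by omega)]
          rw [Finset.sum_congr rfl hsum, Finset.sum_const, smul_zero,
            gg_succ_zero (show L - 1 < a from by omega), zero_add, zero_add]
      case neg =>
        have halt : a < b := by omega
        have haL1 : a ≤ L - 1 := by omega
        have hT1 : (if 1 ≤ a ∧ a ≤ L + 1 ∧ a < b
            then ∑ m ∈ Finset.range a, ccnt L m (b - 1) else 0) =
            (∑ x ∈ Finset.range a, 2 ^ (a - 1 - x) * gg L x) * 2 ^ (b - a - 1) := by
          by_cases ha1 : 1 ≤ a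
          · rw [if_pos (show 1 ≤ a ∧ a ≤ L + 1 ∧ a < b from ⟨ha1, by omega, halt⟩),
              Finset.sum_mul]
            refine Finset.sum_congr rfl fun m hm => ?_
            rw [Finset.mem_range] at hm
            rw [ih, if_pos (show m ≤ b - 1 ∧ b - 1 ≤ L - 1 from ⟨by omega, by omega⟩)]
            rw [show b - 1 - m - 1 = (a - 1 - m) + (b - a - 1) from by omega, pow_add]
            ring
          · rw [if_neg (show ¬(1 ≤ a ∧ a ≤ L + 1 ∧ a < b) from by omega),
              show a = 0 from by omega]
            simp
        have hT3 : (if b ≤ L ∧ a < b then ∑ M ∈ Finset.range b, ccnt L a M else 0) =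
            gg L a * 2 ^ (b - a - 1) := by
          rw [if_pos (show b ≤ L ∧ a < b from ⟨by omega, halt⟩)]
          have : ∀ M ∈ Finset.range b, ccnt L a M =
              gg L a * (if a ≤ M then 2 ^ (M - a - 1) else 0) := by
            intro M hM
            rw [Finset.mem_range] at hM
            rw [ih]
            by_cases h1 : a ≤ M
            · rw [if_pos (show a ≤ M ∧ M ≤ L - 1 from ⟨h1, by omega⟩), if_pos h1]
            · rw [if_neg (show ¬(a ≤ M ∧ M ≤ L - 1) from by omega), if_neg h1, mul_zero]
          rw [Finset.sum_congr rfl this, ← Finset.mul_sum, geo a b halt]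
        rw [hT1, hT3, if_neg (show ¬(a ≤ L ∧ a = b) from by omega), gg, if_pos haL1]
        ring
theorem geo3 (L m : ℕ) (h : m ≤ L - 1) :
    (∑ b ∈ Finset.range (L + 1), if m ≤ b ∧ b ≤ L - 1 then (2 : ℕ) ^ (b - m - 1) else 0) =
      2 ^ (L - 1 - m) := by
  have hsub : Finset.range (L - 1 + 1) ⊆ Finset.range (L + 1) :=
    Finset.range_subset_range.mpr (by omega)
  rw [← Finset.sum_subset hsub (fun x hx1 hx2 => by
    rw [Finset.mem_range] at hx1
    rw [Finset.mem_range] at hx2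
    rw [if_neg (show ¬(m ≤ x ∧ x ≤ L - 1) from by omega)])]
  have hcg : ∀ b ∈ Finset.range (L - 1 + 1),
      (if m ≤ b ∧ b ≤ L - 1 then (2 : ℕ) ^ (b - m - 1) else 0) =
      (if m ≤ b then (2 : ℕ) ^ (b - m - 1) else 0) := by
    intro b hb
    rw [Finset.mem_range] at hb
    by_cases h1 : m ≤ b
    · rw [if_pos ⟨h1, by omega⟩, if_pos h1]
    · rw [if_neg (show ¬(m ≤ b ∧ b ≤ L - 1) from by omega), if_neg h1]
  rw [Finset.sum_congr rfl hcg, geo m (L - 1 + 1) (by omega)]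
  congr 1
  omega

theorem acnt_closed (L : ℕ) (p : Fin (L + 1)) :
    Fintype.card {σ : Equiv.Perm (Fin (L + 1)) // Avoid σ ∧ σ 0 = p} =
      ∑ m ∈ Finset.range ((p : ℕ) + 1), gg L m * 2 ^ (L - 1 - m) := by
  rw [acnt_eq]
  refine Finset.sum_congr rfl fun m hm => ?_
  rw [Finset.mem_range] at hm
  have hpL : (p : ℕ) ≤ L := by omega
  by_cases hmL : m ≤ L - 1
  · have hcg : ∀ b ∈ Finset.range (L + 1), ccnt L m b =
        gg L m * (if m ≤ b ∧ b ≤ L - 1 then 2 ^ (b - m - 1) else 0) := by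
      intro b hb
      rw [ccnt_closed]
      by_cases h1 : m ≤ b ∧ b ≤ L - 1
      · rw [if_pos h1, if_pos h1]
      · rw [if_neg h1, if_neg h1, mul_zero]
    rw [Finset.sum_congr rfl hcg, ← Finset.mul_sum, geo3 L m hmL]
  · have hL1 : 1 ≤ L := by omega
    obtain ⟨T, rfl⟩ : ∃ T, L = T + 1 := ⟨L - 1, by omega⟩
    rw [gg_succ_zero (show T - 1 < m from by omega), zero_mul]
    apply Finset.sum_eq_zero
    intro b _
    rw [ccnt_closed, if_neg (show ¬(m ≤ b ∧ b ≤ T + 1 - 1) from by omega)]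

def AF (n i : ℕ) : ℕ := ∑ m ∈ Finset.range i, gg (n - 1) m * 2 ^ (n - 2 - m)

theorem acnt_AF (L : ℕ) (p : Fin (L + 1)) :
    Fintype.card {σ : Equiv.Perm (Fin (L + 1)) // Avoid σ ∧ σ 0 = p} = AF (L + 1) ((p : ℕ) + 1) := by
  rw [acnt_closed]
  unfold AF
  refine Finset.sum_congr rfl fun m _ => ?_
  congr 2

theorem AF_succ (n i : ℕ) : AF n (i + 1) = AF n i + gg (n - 1) i * 2 ^ (n - 2 - i) :=
  Finset.sum_range_succ _ i

theorem AF_mono_stable (n i j : ℕ) (hn : 3 ≤ n) (hi : n - 2 ≤ i) (hij : i ≤ j) :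
    AF n j = AF n i := by
  unfold AF
  refine (Finset.sum_subset (Finset.range_subset_range.mpr hij) fun x hx1 hx2 => ?_).symm
  rw [Finset.mem_range] at hx1
  rw [Finset.mem_range] at hx2
  obtain ⟨U, rfl⟩ : ∃ U, n = U + 2 := ⟨n - 2, by omega⟩
  rw [show U + 2 - 1 = U + 1 from rfl, gg_succ_zero (show U - 1 < x from by omega), zero_mul]

theorem AF_top (n : ℕ) (hn : 3 ≤ n) : AF n n = AF n (n - 2) ∧ AF n (n - 1) = AF n (n - 2) :=
  ⟨AF_mono_stable n (n - 2) n hn (le_refl _) (by omega),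
   AF_mono_stable n (n - 2) (n - 1) hn (le_refl _) (by omega)⟩

theorem AF_rec' (T k : ℕ) (hk : 1 ≤ k) (hkT : k ≤ T) :
    AF (T + 2) k + AF (T + 1) (k - 1) = AF (T + 2) (k - 1) + 2 * AF (T + 1) k := by
  obtain ⟨j, rfl⟩ : ∃ j, k = j + 1 := ⟨k - 1, by omega⟩
  rw [show j + 1 - 1 = j from rfl]
  unfold AF
  rw [show T + 2 - 1 = T + 1 from rfl, show T + 2 - 2 = T from rfl,
    show T + 1 - 1 = T from rfl, show T + 1 - 2 = T - 1 from rfl]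
  rw [Finset.sum_range_succ (fun m => gg (T + 1) m * 2 ^ (T - m)) j,
    Finset.sum_range_succ (fun m => gg T m * 2 ^ (T - 1 - m)) j]
  have key : gg (T + 1) j * 2 ^ (T - j) =
      (∑ m ∈ Finset.range j, gg T m * 2 ^ (T - 1 - m)) + 2 * (gg T j * 2 ^ (T - 1 - j)) := by
    rw [gg, if_pos (show j ≤ T - 1 from by omega), add_mul, Finset.sum_mul]
    have h2 : 2 * (gg T j * 2 ^ (T - 1 - j)) = gg T j * 2 ^ (T - j) := by
      rw [show T - j = (T - 1 - j) + 1 from by omega, pow_succ]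
      ring
    have hterm : ∀ x ∈ Finset.range j,
        2 ^ (j - 1 - x) * gg T x * 2 ^ (T - j) = gg T x * 2 ^ (T - 1 - x) := by
      intro x hx
      rw [Finset.mem_range] at hx
      rw [show T - 1 - x = (j - 1 - x) + (T - j) from by omega, pow_add]
      ring
    rw [Finset.sum_congr rfl hterm, h2]
    ring
  rw [key]
  ring
theorem AF11 : AF 1 1 = 1 := by decide
theorem AF21 : AF 2 1 = 1 := by decide
theorem AF22 : AF 2 2 = 1 := by decide

theorem AF_rec (n k : ℕ) (hk : 1 ≤ k) (hkn : k ≤ n - 2) :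
    AF n k + AF (n - 1) (k - 1) = AF n (k - 1) + 2 * AF (n - 1) k := by
  obtain ⟨T, rfl⟩ : ∃ T, n = T + 2 := ⟨n - 2, by omega⟩
  have := AF_rec' T k hk (by omega)
  simpa using this

theorem S_eq_AF (S : ℕ → ℕ → ℤ)
    (h11 : S 1 1 = 1) (h21 : S 2 1 = 1) (h22 : S 2 2 = 1)
    (h0 : ∀ n, S n 0 = 0)
    (hrec : ∀ n k, 1 ≤ k → k ≤ n - 2 →
      S n k = S n (k - 1) + 2 * S (n - 1) k - S (n - 1) (k - 1))
    (htop : ∀ n, 3 ≤ n → S n n = S n (n - 2) ∧ S n (n - 1) = S n (n - 2)) :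
    ∀ n i, 1 ≤ n → 1 ≤ i → i ≤ n → S n i = (AF n i : ℤ) := by
  intro n
  induction n using Nat.strong_induction_on with
  | _ n IH =>
  intro i hn hi hin
  match n, hn with
  | 1, _ =>
    have : i = 1 := by omega
    subst this
    rw [h11, AF11]; norm_num
  | 2, _ =>
    have : i = 1 ∨ i = 2 := by omega
    rcases this with rfl | rfl
    · rw [h21, AF21]; norm_num
    · rw [h22, AF22]; norm_num
  | (N + 3), _ =>
    set n := N + 3 with hn3
    have hn3' : 3 ≤ n := by omega
    -- step 1: all k ≤ n - 2
    have key : ∀ k, k ≤ n - 2 → S n k = (AF n k : ℤ) := by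
      intro k
      induction k with
      | zero =>
        intro _
        rw [h0]
        unfold AF
        simp
      | succ k ihk =>
        intro hk
        have hSk : S n k = (AF n k : ℤ) := ihk (by omega)
        have hS1 : S (n - 1) (k + 1) = (AF (n - 1) (k + 1) : ℤ) :=
          IH (n - 1) (by omega) (k + 1) (by omega) (by omega) (by omega)
        have hS2 : S (n - 1) k = (AF (n - 1) k : ℤ) := by
          rcases Nat.eq_zero_or_pos k with rfl | hkpos
          · rw [h0]; unfold AF; simp
          · exact IH (n - 1) (by omega) k (by omega) hkpos (by omega)
        have hr := hrec n (k + 1) (by omega) hk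
        rw [show k + 1 - 1 = k from rfl] at hr
        have har := AF_rec n (k + 1) (by omega) hk
        rw [show k + 1 - 1 = k from rfl] at har
        rw [hr, hSk, hS1, hS2]
        have : (AF n (k + 1) : ℤ) + AF (n - 1) k = AF n k + 2 * AF (n - 1) (k + 1) := by
          exact_mod_cast congrArg (Nat.cast : ℕ → ℤ) har
        omega
    rcases Nat.lt_or_ge i (n - 1) with hJ | hJ
    · exact key i (by omega)
    · have hbase := key (n - 2) (le_refl _)
      obtain ⟨ht1, ht2⟩ := htop n hn3'
      obtain ⟨hA1, hA2⟩ := AF_top n hn3'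
      rcases (show i = n - 1 ∨ i = n by omega) with rfl | rfl
      · rw [ht2, hbase, hA2]
      · rw [ht1, hbase, hA1]
theorem val_ne' {n : ℕ} (τ : Equiv.Perm (Fin n)) {a b : Fin n} (h : a ≠ b) :
    (τ a : ℕ) ≠ τ b := fun hc => h (τ.injective (Fin.val_injective hc))

theorem strictMono_vec4 {n : ℕ} {a b c d : Fin n} (h1 : a < b) (h2 : b < c) (h3 : c < d) :
    StrictMono ![a, b, c, d] := by
  intro x y hxy
  match x, y, hxy with
  | ⟨0, _⟩, ⟨0, _⟩, h => exact absurd (Fin.mk_lt_mk.mp h) (by omega)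
  | ⟨0, _⟩, ⟨1, _⟩, _ => exact h1
  | ⟨0, _⟩, ⟨2, _⟩, _ => exact h1.trans h2
  | ⟨0, _⟩, ⟨3, _⟩, _ => exact (h1.trans h2).trans h3
  | ⟨1, _⟩, ⟨0, _⟩, h => exact absurd (Fin.mk_lt_mk.mp h) (by omega)
  | ⟨1, _⟩, ⟨1, _⟩, h => exact absurd (Fin.mk_lt_mk.mp h) (by omega)
  | ⟨1, _⟩, ⟨2, _⟩, _ => exact h2
  | ⟨1, _⟩, ⟨3, _⟩, _ => exact h2.trans h3
  | ⟨2, _⟩, ⟨0, _⟩, h => exact absurd (Fin.mk_lt_mk.mp h) (by omega)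
  | ⟨2, _⟩, ⟨1, _⟩, h => exact absurd (Fin.mk_lt_mk.mp h) (by omega)
  | ⟨2, _⟩, ⟨2, _⟩, h => exact absurd (Fin.mk_lt_mk.mp h) (by omega)
  | ⟨2, _⟩, ⟨3, _⟩, _ => exact h3
  | ⟨3, _⟩, ⟨0, _⟩, h => exact absurd (Fin.mk_lt_mk.mp h) (by omega)
  | ⟨3, _⟩, ⟨1, _⟩, h => exact absurd (Fin.mk_lt_mk.mp h) (by omega)
  | ⟨3, _⟩, ⟨2, _⟩, h => exact absurd (Fin.mk_lt_mk.mp h) (by omega)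
  | ⟨3, _⟩, ⟨3, _⟩, h => exact absurd (Fin.mk_lt_mk.mp h) (by omega)
  | ⟨x + 4, hx⟩, _, _ => exact absurd hx (by omega)
  | ⟨_, _⟩, ⟨y + 4, hy⟩, _ => exact absurd hy (by omega)

theorem contains1243_iff {n : ℕ} (π : Equiv.Perm (Fin n)) :
    ContainsPat π ![1, 2, 4, 3] ↔ ∃ a b c d : Fin n, a < b ∧ b < c ∧ c < d ∧
      (π a : ℕ) < π b ∧ (π b : ℕ) < π d ∧ (π d : ℕ) < π c := by
  constructor
  · rintro ⟨f, hf, hiff⟩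
    exact ⟨f 0, f 1, f 2, f 3, hf (by decide), hf (by decide), hf (by decide),
      Fin.lt_def.mp ((hiff 0 1).mp (by decide)),
      Fin.lt_def.mp ((hiff 1 3).mp (by decide)),
      Fin.lt_def.mp ((hiff 3 2).mp (by decide))⟩
  · rintro ⟨a, b, c, d, h1, h2, h3, v1, v2, v3⟩
    refine ⟨![a, b, c, d], strictMono_vec4 h1 h2 h3, ?_⟩
    intro x y
    match x, y with
    | ⟨0, _⟩, ⟨0, _⟩ => exact iff_of_false (show ¬((1:ℕ) < 1) by omega) (fun h => absurd (Fin.lt_def.mp h : (π a : ℕ) < π a) (by omega))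
    | ⟨0, _⟩, ⟨1, _⟩ => exact iff_of_true (show (1:ℕ) < 2 by omega) (Fin.lt_def.mpr (show (π a : ℕ) < π b by omega))
    | ⟨0, _⟩, ⟨2, _⟩ => exact iff_of_true (show (1:ℕ) < 4 by omega) (Fin.lt_def.mpr (show (π a : ℕ) < π c by omega))
    | ⟨0, _⟩, ⟨3, _⟩ => exact iff_of_true (show (1:ℕ) < 3 by omega) (Fin.lt_def.mpr (show (π a : ℕ) < π d by omega))
    | ⟨1, _⟩, ⟨0, _⟩ => exact iff_of_false (show ¬((2:ℕ) < 1) by omega) (fun h => absurd (Fin.lt_def.mp h : (π b : ℕ) < π a) (by omega))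
    | ⟨1, _⟩, ⟨1, _⟩ => exact iff_of_false (show ¬((2:ℕ) < 2) by omega) (fun h => absurd (Fin.lt_def.mp h : (π b : ℕ) < π b) (by omega))
    | ⟨1, _⟩, ⟨2, _⟩ => exact iff_of_true (show (2:ℕ) < 4 by omega) (Fin.lt_def.mpr (show (π b : ℕ) < π c by omega))
    | ⟨1, _⟩, ⟨3, _⟩ => exact iff_of_true (show (2:ℕ) < 3 by omega) (Fin.lt_def.mpr (show (π b : ℕ) < π d by omega))
    | ⟨2, _⟩, ⟨0, _⟩ => exact iff_of_false (show ¬((4:ℕ) < 1) by omega) (fun h => absurd (Fin.lt_def.mp h : (π c : ℕ) < π a) (by omega))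
    | ⟨2, _⟩, ⟨1, _⟩ => exact iff_of_false (show ¬((4:ℕ) < 2) by omega) (fun h => absurd (Fin.lt_def.mp h : (π c : ℕ) < π b) (by omega))
    | ⟨2, _⟩, ⟨2, _⟩ => exact iff_of_false (show ¬((4:ℕ) < 4) by omega) (fun h => absurd (Fin.lt_def.mp h : (π c : ℕ) < π c) (by omega))
    | ⟨2, _⟩, ⟨3, _⟩ => exact iff_of_false (show ¬((4:ℕ) < 3) by omega) (fun h => absurd (Fin.lt_def.mp h : (π c : ℕ) < π d) (by omega))
    | ⟨3, _⟩, ⟨0, _⟩ => exact iff_of_false (show ¬((3:ℕ) < 1) by omega) (fun h => absurd (Fin.lt_def.mp h : (π d : ℕ) < π a) (by omega))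
    | ⟨3, _⟩, ⟨1, _⟩ => exact iff_of_false (show ¬((3:ℕ) < 2) by omega) (fun h => absurd (Fin.lt_def.mp h : (π d : ℕ) < π b) (by omega))
    | ⟨3, _⟩, ⟨2, _⟩ => exact iff_of_true (show (3:ℕ) < 4 by omega) (Fin.lt_def.mpr (show (π d : ℕ) < π c by omega))
    | ⟨3, _⟩, ⟨3, _⟩ => exact iff_of_false (show ¬((3:ℕ) < 3) by omega) (fun h => absurd (Fin.lt_def.mp h : (π d : ℕ) < π d) (by omega))
    | ⟨x + 4, hx⟩, _ => exact absurd hx (by omega)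
    | ⟨_, _⟩, ⟨y + 4, hy⟩ => exact absurd hy (by omega)

theorem contains1342_iff {n : ℕ} (π : Equiv.Perm (Fin n)) :
    ContainsPat π ![1, 3, 4, 2] ↔ ∃ a b c d : Fin n, a < b ∧ b < c ∧ c < d ∧
      (π a : ℕ) < π d ∧ (π d : ℕ) < π b ∧ (π b : ℕ) < π c := by
  constructor
  · rintro ⟨f, hf, hiff⟩
    exact ⟨f 0, f 1, f 2, f 3, hf (by decide), hf (by decide), hf (by decide),
      Fin.lt_def.mp ((hiff 0 3).mp (by decide)),
      Fin.lt_def.mp ((hiff 3 1).mp (by decide)),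
      Fin.lt_def.mp ((hiff 1 2).mp (by decide))⟩
  · rintro ⟨a, b, c, d, h1, h2, h3, v1, v2, v3⟩
    refine ⟨![a, b, c, d], strictMono_vec4 h1 h2 h3, ?_⟩
    intro x y
    match x, y with
    | ⟨0, _⟩, ⟨0, _⟩ => exact iff_of_false (show ¬((1:ℕ) < 1) by omega) (fun h => absurd (Fin.lt_def.mp h : (π a : ℕ) < π a) (by omega))
    | ⟨0, _⟩, ⟨1, _⟩ => exact iff_of_true (show (1:ℕ) < 3 by omega) (Fin.lt_def.mpr (show (π a : ℕ) < π b by omega))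
    | ⟨0, _⟩, ⟨2, _⟩ => exact iff_of_true (show (1:ℕ) < 4 by omega) (Fin.lt_def.mpr (show (π a : ℕ) < π c by omega))
    | ⟨0, _⟩, ⟨3, _⟩ => exact iff_of_true (show (1:ℕ) < 2 by omega) (Fin.lt_def.mpr (show (π a : ℕ) < π d by omega))
    | ⟨1, _⟩, ⟨0, _⟩ => exact iff_of_false (show ¬((3:ℕ) < 1) by omega) (fun h => absurd (Fin.lt_def.mp h : (π b : ℕ) < π a) (by omega))
    | ⟨1, _⟩, ⟨1, _⟩ => exact iff_of_false (show ¬((3:ℕ) < 3) by omega) (fun h => absurd (Fin.lt_def.mp h : (π b : ℕ) < π b) (by omega))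
    | ⟨1, _⟩, ⟨2, _⟩ => exact iff_of_true (show (3:ℕ) < 4 by omega) (Fin.lt_def.mpr (show (π b : ℕ) < π c by omega))
    | ⟨1, _⟩, ⟨3, _⟩ => exact iff_of_false (show ¬((3:ℕ) < 2) by omega) (fun h => absurd (Fin.lt_def.mp h : (π b : ℕ) < π d) (by omega))
    | ⟨2, _⟩, ⟨0, _⟩ => exact iff_of_false (show ¬((4:ℕ) < 1) by omega) (fun h => absurd (Fin.lt_def.mp h : (π c : ℕ) < π a) (by omega))
    | ⟨2, _⟩, ⟨1, _⟩ => exact iff_of_false (show ¬((4:ℕ) < 3) by omega) (fun h => absurd (Fin.lt_def.mp h : (π c : ℕ) < π b) (by omega))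
    | ⟨2, _⟩, ⟨2, _⟩ => exact iff_of_false (show ¬((4:ℕ) < 4) by omega) (fun h => absurd (Fin.lt_def.mp h : (π c : ℕ) < π c) (by omega))
    | ⟨2, _⟩, ⟨3, _⟩ => exact iff_of_false (show ¬((4:ℕ) < 2) by omega) (fun h => absurd (Fin.lt_def.mp h : (π c : ℕ) < π d) (by omega))
    | ⟨3, _⟩, ⟨0, _⟩ => exact iff_of_false (show ¬((2:ℕ) < 1) by omega) (fun h => absurd (Fin.lt_def.mp h : (π d : ℕ) < π a) (by omega))
    | ⟨3, _⟩, ⟨1, _⟩ => exact iff_of_true (show (2:ℕ) < 3 by omega) (Fin.lt_def.mpr (show (π d : ℕ) < π b by omega))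
    | ⟨3, _⟩, ⟨2, _⟩ => exact iff_of_true (show (2:ℕ) < 4 by omega) (Fin.lt_def.mpr (show (π d : ℕ) < π c by omega))
    | ⟨3, _⟩, ⟨3, _⟩ => exact iff_of_false (show ¬((2:ℕ) < 2) by omega) (fun h => absurd (Fin.lt_def.mp h : (π d : ℕ) < π d) (by omega))
    | ⟨x + 4, hx⟩, _ => exact absurd hx (by omega)
    | ⟨_, _⟩, ⟨y + 4, hy⟩ => exact absurd hy (by omega)

theorem avoid_iff {n : ℕ} (π : Equiv.Perm (Fin n)) :
    (¬ ContainsPat π ![1, 2, 4, 3] ∧ ¬ ContainsPat π ![1, 3, 4, 2]) ↔ Avoid π := by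
  constructor
  · rintro ⟨H1, H2⟩
    intro a b c d h1 h2 h3 v1 v2 v3 v4
    have hbd : (π b : ℕ) ≠ π d := val_ne' π (by intro h; subst h; exact absurd (h2.trans h3) (lt_irrefl b))
    rcases Nat.lt_or_ge (π b : ℕ) (π d : ℕ) with h | h
    · exact H1 (contains1243_iff π |>.mpr ⟨a, b, c, d, h1, h2, h3, v1, h, v4⟩)
    · exact H2 (contains1342_iff π |>.mpr ⟨a, b, c, d, h1, h2, h3, v3, by omega, v2⟩)
  · intro hA
    constructor
    · intro hC
      rw [contains1243_iff] at hC
      obtain ⟨a, b, c, d, h1, h2, h3, v1, v2, v3⟩ := hC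
      exact hA a b c d h1 h2 h3 v1 (by omega) (by omega) v3
    · intro hC
      rw [contains1342_iff] at hC
      obtain ⟨a, b, c, d, h1, h2, h3, v1, v2, v3⟩ := hC
      exact hA a b c d h1 h2 h3 (by omega) v3 v1 (by omega)

theorem firstIs_iff {L : ℕ} (π : Equiv.Perm (Fin (L + 1))) (i : ℕ) :
    FirstIs π i ↔ (π 0 : ℕ) + 1 = i := by
  constructor
  · intro h
    exact h 0 rfl
  · intro h j hj
    have : j = 0 := Fin.ext hj
    rw [this]
    exact h

/-- The number of permutations of `[n]` avoiding the two patterns and starting with `i`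
equals the Schröder triangle entry `S_{n,i}`. -/
theorem stmt_16 (S : ℕ → ℕ → ℤ)
    (h11 : S 1 1 = 1) (h21 : S 2 1 = 1) (h22 : S 2 2 = 1)
    (h0 : ∀ n, S n 0 = 0)
    (hrec : ∀ n k, 1 ≤ k → k ≤ n - 2 →
      S n k = S n (k - 1) + 2 * S (n - 1) k - S (n - 1) (k - 1))
    (htop : ∀ n, 3 ≤ n → S n n = S n (n - 2) ∧ S n (n - 1) = S n (n - 2)) :
    ∀ n i, 1 ≤ n → 1 ≤ i → i ≤ n →
      (Nat.card {π : Equiv.Perm (Fin n) //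
        ¬ ContainsPat π ![1, 2, 4, 3] ∧ ¬ ContainsPat π ![1, 3, 4, 2] ∧ FirstIs π i} : ℤ) = S n i := by
  intro n i hn hi hin
  obtain ⟨L, rfl⟩ : ∃ L, n = L + 1 := ⟨n - 1, by omega⟩
  have hiL : i - 1 < L + 1 := by omega
  have hcard : Nat.card {π : Equiv.Perm (Fin (L + 1)) //
      ¬ ContainsPat π ![1, 2, 4, 3] ∧ ¬ ContainsPat π ![1, 3, 4, 2] ∧ FirstIs π i} =
      Fintype.card {σ : Equiv.Perm (Fin (L + 1)) // Avoid σ ∧ σ 0 = (⟨i - 1, hiL⟩ : Fin (L + 1))} := by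
    rw [Nat.card_congr (Equiv.subtypeEquivRight (q := fun σ : Equiv.Perm (Fin (L + 1)) =>
      Avoid σ ∧ σ 0 = (⟨i - 1, hiL⟩ : Fin (L + 1))) ?_), Nat.card_eq_fintype_card]
    intro π
    rw [and_assoc.symm, firstIs_iff]
    constructor
    · rintro ⟨hc, hfi⟩
      refine ⟨(avoid_iff π).mp hc, ?_⟩
      apply Fin.ext
      show ((π 0 : Fin (L + 1)) : ℕ) = i - 1
      omega
    · rintro ⟨hA, hfi⟩
      refine ⟨(avoid_iff π).mpr hA, ?_⟩
      have : ((π 0 : Fin (L + 1)) : ℕ) = i - 1 := by rw [hfi]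
      omega
  rw [hcard, acnt_AF L ⟨i - 1, hiL⟩]
  have hval : ((⟨i - 1, hiL⟩ : Fin (L + 1)) : ℕ) + 1 = i := by
    show i - 1 + 1 = i
    omega
  rw [hval]
  exact (S_eq_AF S h11 h21 h22 h0 hrec htop (L + 1) i (by omega) hi hin).symm
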